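/- Main constrained transport theorem: let B^n : ℤ² → ℝ² be a nodal grid vector field whose discrete divergence vanishes at every node, (div B^n)(i,j) = 0 for all (i,j) ∈ ℤ², and let Ω : ℤ² → ℝ be arbitrary values at staggered nodes. Define (i) the staggered values B^n_{stag}(i,j) = ¼(B^n(i,j) + B^n(i+1,j) + B^n(i,j+1) + B^n(i+1,j+1)); (ii) the CTM-updated staggered values B^{n+1}_{stag,x}(i,j) = B^n_{stag,x}(i,j) − (Δt/(2Δy))(Ω(i,j+1) − Ω(i,j−1)) and B^{n+1}_{stag,y}(i,j) = B^n_{stag,y}(i,j) + (Δt/(2Δx))(Ω(i+1,j) − Ω(i−1,j)); (iii) the new nodal values B^{n+1}(i,j) = ¼(B^{n+1}_{stag}(i,j) + B^{n+1}_{stag}(i−1,j) + B^{n+1}_{stag}(i,j−1) + B^{n+1}_{stag}(i−1,j−1)). Then (div B^{n+1})(i,j) = 0 for all (i,j) ∈ ℤ². -/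
import Mathlib


/-- Discrete central-difference divergence of a grid vector field `B : ℤ² → ℝ²`:
`(div B)(i,j) = (B_x(i+1,j) − B_x(i−1,j))/(2Δx) + (B_y(i,j+1) − B_y(i,j−1))/(2Δy)`. -/
noncomputable def ddiv (Δx Δy : ℝ) (B : ℤ → ℤ → ℝ × ℝ) (i j : ℤ) : ℝ :=
  ((B (i + 1) j).1 - (B (i - 1) j).1) / (2 * Δx)
    + ((B i (j + 1)).2 - (B i (j - 1)).2) / (2 * Δy)

/-- Four-point average of nodal data onto the staggered node `(i+½,j+½)` indexed by
`(i,j)`. -/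
noncomputable def stagAvg (B : ℤ → ℤ → ℝ × ℝ) : ℤ → ℤ → ℝ × ℝ := fun i j =>
  (1 / 4 : ℝ) • (B i j + B (i + 1) j + B i (j + 1) + B (i + 1) (j + 1))

/-- The CTM update of a staggered grid vector field with electromotive values `Ω`. -/
noncomputable def ctmUpdate (Δx Δy Δt : ℝ) (B : ℤ → ℤ → ℝ × ℝ) (Ω : ℤ → ℤ → ℝ) :
    ℤ → ℤ → ℝ × ℝ := fun i j =>
  ((B i j).1 - Δt / (2 * Δy) * (Ω i (j + 1) - Ω i (j - 1)),
   (B i j).2 + Δt / (2 * Δx) * (Ω (i + 1) j - Ω (i - 1) j))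

/-- Four-point average of staggered data back onto the node `(i,j)`. -/
noncomputable def nodalAvg (B : ℤ → ℤ → ℝ × ℝ) : ℤ → ℤ → ℝ × ℝ := fun i j =>
  (1 / 4 : ℝ) • (B i j + B (i - 1) j + B i (j - 1) + B (i - 1) (j - 1))

/-- Main constrained transport theorem: if the nodal field `B^n` has
vanishing discrete divergence at every node, then so does the new nodal field `B^{n+1}`
obtained by projecting onto the staggered grid, applying the CTM update with arbitrary
`Ω`, and averaging back. -/
theorem constrained_transport_divergence_free (Δx Δy Δt : ℝ)
    (hΔx : 0 < Δx) (hΔy : 0 < Δy) (hΔt : 0 < Δt)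
    (Bn : ℤ → ℤ → ℝ × ℝ) (Ω : ℤ → ℤ → ℝ)
    (hdiv : ∀ i j : ℤ, ddiv Δx Δy Bn i j = 0) :
    ∀ i j : ℤ,
      ddiv Δx Δy (nodalAvg (ctmUpdate Δx Δy Δt (stagAvg Bn) Ω)) i j = 0 := by
  intro i j
  have h : ∀ a b : ℤ, ddiv Δx Δy Bn (i + a) (j + b) = 0 := fun a b => hdiv _ _
  simp only [ddiv, nodalAvg, ctmUpdate, stagAvg, Prod.smul_mk, Prod.mk_add_mk, smul_eq_mul,
    Prod.smul_fst, Prod.smul_snd, Prod.fst_add, Prod.snd_add] at h ⊢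
  simp only [add_sub_cancel_right, sub_add_cancel, add_sub_cancel_left] at h ⊢
  have e1 := h (-1) (-1); have e2 := h 0 (-1); have e3 := h 1 (-1)
  have e4 := h (-1) 0; have e5 := h 0 0; have e6 := h 1 0
  have e7 := h (-1) 1; have e8 := h 0 1; have e9 := h 1 1
  simp only [show ∀ k : ℤ, k + -1 = k - 1 from fun k => rfl, add_zero,
    sub_add_cancel, add_sub_cancel_right, sub_sub, add_assoc] at e1 e2 e3 e4 e5 e6 e7 e8 e9 ⊢
  norm_num at e1 e2 e3 e4 e5 e6 e7 e8 e9 ⊢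
  linear_combination (1/16) * (e1 + 2*e2 + e3 + 2*e4 + 4*e5 + 2*e6 + e7 + 2*e8 + e9)
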